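/- arXiv:2002.07729 — 4 statements merged into one kernel-verified Lean document; each statement's English description precedes it below -/
import Mathlib

section
/- Let M ≥ 1, let θ* ∈ ℝ, and let θ̂, θ̄, b, cnf : {1,…,M} → ℝ satisfy: (i) |θ̄(i) − θ*| ≤ b(i) for all i; (ii) |θ̂(i) − θ̄(i)| ≤ cnf(i) for all i; (iii) b is monotonically nondecreasing; (iv) for some κ ∈ (0,1], κ·cnf(i) ≤ cnf(i+1) ≤ cnf(i) for all i ∈ {1,…,M−1}; and (v) cnf(i) ≥ 0 for all i. Define the intervals I(i) := [θ̂(i) − 2cnf(i), θ̂(i) + 2cnf(i)] and the index î := max{ i ∈ {1,…,M} : ⋂_{j=1}^{i} I(j) ≠ ∅ }. Then |θ̂(î) − θ*| ≤ 6(1 + κ⁻¹) · min_{i ∈ {1,…,M}} ( b(i) + cnf(i) ). -/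
/-!
Write `I j = [θhat j - 2 cnf j, θhat j + 2 cnf j]`; the truth `θstar` is within `cnf j + b j` of
`θhat j`, so it lies in `I j` as soon as `b j ≤ cnf j`. If the oracle index `i` is at most `ihat`,
then `I i` and `I ihat` meet, and `cnf ihat ≤ cnf i` gives
`|θhat ihat - θstar| ≤ 4 cnf i + (cnf i + b i)`. If `i > ihat`, the intervals `I 1, …, I (ihat + 1)`
have no common point, so they cannot all contain `θstar`: some `j ≤ ihat + 1` has `cnf j < b j`.
Geometric decay then gives `κ cnf ihat ≤ cnf (ihat + 1) ≤ cnf j < b j ≤ b i`, hence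
`|θhat ihat - θstar| ≤ cnf ihat + b ihat ≤ (κ⁻¹ + 1) b i`.
-/

open Set

theorem monotoneOn_Icc_of_le_add_one {β : Type*} [Preorder β] {f : ℕ → β} {m n : ℕ}
    (h : ∀ i ∈ Finset.Icc m (n - 1), f i ≤ f (i + 1)) : MonotoneOn f (Icc m n) :=
  monotoneOn_of_le_add_one ordConnected_Icc fun i _ hi hi' =>
    h i (Finset.mem_Icc.2 ⟨hi.1, Nat.le_sub_one_of_lt hi'.2⟩)

theorem antitoneOn_Icc_of_add_one_le {β : Type*} [Preorder β] {f : ℕ → β} {m n : ℕ}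
    (h : ∀ i ∈ Finset.Icc m (n - 1), f (i + 1) ≤ f i) : AntitoneOn f (Icc m n) :=
  antitoneOn_of_add_one_le ordConnected_Icc fun i _ hi hi' =>
    h i (Finset.mem_Icc.2 ⟨hi.1, Nat.le_sub_one_of_lt hi'.2⟩)

section IntervalFamily

variable {ι α : Type*} [AddCommGroup α] [LinearOrder α] [IsOrderedAddMonoid α]

theorem abs_sub_le_of_mem_Icc_of_mem_Icc {x a c r s : α}
    (ha : x ∈ Icc (a - r) (a + r)) (hc : x ∈ Icc (c - s) (c + s)) : |a - c| ≤ r + s :=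
  (abs_sub_le a x c).trans <|
    add_le_add (mem_Icc_iff_abs_le.2 ha) (abs_sub_comm c x ▸ mem_Icc_iff_abs_le.2 hc)

theorem nonempty_biInter_Icc_of_abs_sub_le {s : Finset ι} {c r : ι → α} {x : α}
    (h : ∀ j ∈ s, |c j - x| ≤ r j) : (⋂ j ∈ s, Icc (c j - r j) (c j + r j)).Nonempty :=
  ⟨x, mem_iInter₂.2 fun j hj => mem_Icc_iff_abs_le.1 (h j hj)⟩

end IntervalFamily

section Lepski

variable {θstar : ℝ} {θhat b cnf : ℕ → ℝ}

theorem exists_cnf_lt_bias_of_not_nonempty {s : Finset ℕ}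
    (hdist : ∀ j ∈ s, |θhat j - θstar| ≤ cnf j + b j)
    (hempty : ¬(⋂ j ∈ s, Icc (θhat j - 2 * cnf j) (θhat j + 2 * cnf j)).Nonempty) :
    ∃ j ∈ s, cnf j < b j := by
  by_contra! h
  exact hempty <| nonempty_biInter_Icc_of_abs_sub_le fun j hj =>
    (hdist j hj).trans (by linarith [h j hj])

theorem abs_sub_le_of_le_of_nonempty {i k : ℕ} (hik : i ∈ Finset.Icc 1 k)
    (hne : (⋂ j ∈ Finset.Icc 1 k, Icc (θhat j - 2 * cnf j) (θhat j + 2 * cnf j)).Nonempty)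
    (hcnf : cnf k ≤ cnf i) (hdist : |θhat i - θstar| ≤ cnf i + b i) :
    |θhat k - θstar| ≤ b i + 5 * cnf i := by
  obtain ⟨x, hx⟩ := hne
  rw [mem_iInter₂] at hx
  rw [Finset.mem_Icc] at hik
  have hki : |θhat k - θhat i| ≤ 2 * cnf k + 2 * cnf i :=
    abs_sub_le_of_mem_Icc_of_mem_Icc (hx k (Finset.mem_Icc.2 ⟨by omega, le_rfl⟩))
      (hx i (Finset.mem_Icc.2 hik))
  calc |θhat k - θstar| ≤ |θhat k - θhat i| + |θhat i - θstar| := abs_sub_le _ _ _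
    _ ≤ b i + 5 * cnf i := by linarith

theorem abs_sub_le_of_lt_of_not_nonempty {M i k : ℕ} {κ : ℝ} (hκ : 0 < κ)
    (hb : MonotoneOn b (Icc 1 M)) (hcnf : AntitoneOn cnf (Icc 1 M))
    (hdist : ∀ j ∈ Finset.Icc 1 M, |θhat j - θstar| ≤ cnf j + b j)
    (hk : 1 ≤ k) (hki : k < i) (hi : i ≤ M) (hdecay : κ * cnf k ≤ cnf (k + 1))
    (hempty : ¬(⋂ j ∈ Finset.Icc 1 (k + 1),
      Icc (θhat j - 2 * cnf j) (θhat j + 2 * cnf j)).Nonempty) :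
    |θhat k - θstar| ≤ (1 + κ⁻¹) * b i := by
  obtain ⟨j, hj, hcnf_lt⟩ := exists_cnf_lt_bias_of_not_nonempty
    (fun j hj => hdist j (Finset.Icc_subset_Icc_right (by omega) hj)) hempty
  rw [Finset.mem_Icc] at hj
  have hcnf_k : cnf k ≤ κ⁻¹ * b i := (le_inv_mul_iff₀ hκ).2 <|
    calc κ * cnf k ≤ cnf (k + 1) := hdecay
      _ ≤ cnf j := hcnf ⟨hj.1, by omega⟩ ⟨by omega, by omega⟩ hj.2
      _ ≤ b j := hcnf_lt.le
      _ ≤ b i := hb ⟨hj.1, by omega⟩ ⟨by omega, hi⟩ (by omega)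
  calc |θhat k - θstar| ≤ cnf k + b k := hdist k (Finset.mem_Icc.2 ⟨hk, by omega⟩)
    _ ≤ κ⁻¹ * b i + b i := add_le_add hcnf_k (hb ⟨hk, by omega⟩ ⟨by omega, hi⟩ hki.le)
    _ = (1 + κ⁻¹) * b i := by ring

end Lepski

theorem slope_oracle_inequality_general
    (M : ℕ) (θstar : ℝ) (θhat θbar b cnf : ℕ → ℝ) (κ : ℝ)
    (hκ0 : 0 < κ)
    (hbias : ∀ i ∈ Finset.Icc 1 M, |θbar i - θstar| ≤ b i)
    (hconf : ∀ i ∈ Finset.Icc 1 M, |θhat i - θbar i| ≤ cnf i)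
    (hb_mono : ∀ i ∈ Finset.Icc 1 (M - 1), b i ≤ b (i + 1))
    (hcnf_mono : ∀ i ∈ Finset.Icc 1 (M - 1),
      κ * cnf i ≤ cnf (i + 1) ∧ cnf (i + 1) ≤ cnf i)
    (ihat : ℕ) (hihat_mem : ihat ∈ Finset.Icc 1 M)
    (hihat_nonempty :
      (⋂ j ∈ Finset.Icc 1 ihat,
        Set.Icc (θhat j - 2 * cnf j) (θhat j + 2 * cnf j)).Nonempty)
    (hihat_max : ∀ i ∈ Finset.Icc 1 M,
      (⋂ j ∈ Finset.Icc 1 i,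
        Set.Icc (θhat j - 2 * cnf j) (θhat j + 2 * cnf j)).Nonempty → i ≤ ihat) :
    ∀ i ∈ Finset.Icc 1 M,
      |θhat ihat - θstar| ≤ 6 * (1 + κ⁻¹) * (b i + cnf i) := by
  have hb : MonotoneOn b (Icc 1 M) := monotoneOn_Icc_of_le_add_one hb_mono
  have hcnf : AntitoneOn cnf (Icc 1 M) :=
    antitoneOn_Icc_of_add_one_le fun i hi => (hcnf_mono i hi).2
  have hdist : ∀ j ∈ Finset.Icc 1 M, |θhat j - θstar| ≤ cnf j + b j := fun j hj =>
    (abs_sub_le _ (θbar j) _).trans (add_le_add (hconf j hj) (hbias j hj))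
  intro i hi
  have hb_i : 0 ≤ b i := (abs_nonneg _).trans (hbias i hi)
  have hcnf_i : 0 ≤ cnf i := (abs_nonneg _).trans (hconf i hi)
  have hκ_inv : 0 ≤ κ⁻¹ := inv_nonneg.2 hκ0.le
  rw [Finset.mem_Icc] at hi hihat_mem
  rcases le_or_gt i ihat with hle | hlt
  · calc |θhat ihat - θstar| ≤ b i + 5 * cnf i :=
          abs_sub_le_of_le_of_nonempty (Finset.mem_Icc.2 ⟨hi.1, hle⟩) hihat_nonempty
            (hcnf ⟨hi.1, by omega⟩ ⟨by omega, hihat_mem.2⟩ hle)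
            (hdist i (Finset.mem_Icc.2 hi))
      _ ≤ 6 * (1 + κ⁻¹) * (b i + cnf i) := by nlinarith
  · have hempty :=
      mt (hihat_max (ihat + 1) (Finset.mem_Icc.2 ⟨by omega, hlt.trans_le hi.2⟩)) (by omega)
    calc |θhat ihat - θstar| ≤ (1 + κ⁻¹) * b i :=
          abs_sub_le_of_lt_of_not_nonempty hκ0 hb hcnf hdist hihat_mem.1 hlt hi.2
            (hcnf_mono ihat (Finset.mem_Icc.2 ⟨hihat_mem.1, by omega⟩)).1 hempty
      _ ≤ 6 * (1 + κ⁻¹) * (b i + cnf i) := by nlinarith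

/-- **SLOPE oracle inequality (deterministic core).**
Given candidate estimates `θhat i`, their means `θbar i`, a valid nondecreasing bias
bound `b`, and a valid nonnegative confidence bound `cnf` with geometric decay constant
`κ ∈ (0,1]`, the Lepski-selected index `ihat` (the largest index whose prefix of intervals
`I(j) = [θhat j − 2 cnf j, θhat j + 2 cnf j]` has a common point) satisfies
`|θhat ihat − θstar| ≤ 6 (1 + κ⁻¹) min_i (b i + cnf i)`. -/
theorem slope_oracle_inequality
    (M : ℕ) (hM : 1 ≤ M) (θstar : ℝ) (θhat θbar b cnf : ℕ → ℝ) (κ : ℝ)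
    (hκ0 : 0 < κ) (hκ1 : κ ≤ 1)
    (hbias : ∀ i ∈ Finset.Icc 1 M, |θbar i - θstar| ≤ b i)
    (hconf : ∀ i ∈ Finset.Icc 1 M, |θhat i - θbar i| ≤ cnf i)
    (hb_mono : ∀ i ∈ Finset.Icc 1 (M - 1), b i ≤ b (i + 1))
    (hcnf_mono : ∀ i ∈ Finset.Icc 1 (M - 1),
      κ * cnf i ≤ cnf (i + 1) ∧ cnf (i + 1) ≤ cnf i)
    (hcnf_nonneg : ∀ i ∈ Finset.Icc 1 M, 0 ≤ cnf i)
    (ihat : ℕ) (hihat_mem : ihat ∈ Finset.Icc 1 M)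
    (hihat_nonempty :
      (⋂ j ∈ Finset.Icc 1 ihat,
        Set.Icc (θhat j - 2 * cnf j) (θhat j + 2 * cnf j)).Nonempty)
    (hihat_max : ∀ i ∈ Finset.Icc 1 M,
      (⋂ j ∈ Finset.Icc 1 i,
        Set.Icc (θhat j - 2 * cnf j) (θhat j + 2 * cnf j)).Nonempty → i ≤ ihat) :
    ∀ i ∈ Finset.Icc 1 M,
      |θhat ihat - θstar| ≤ 6 * (1 + κ⁻¹) * (b i + cnf i) :=
  slope_oracle_inequality_general M θstar θhat θbar b cnf κ hκ0 hbias hconf hb_mono hcnf_mono ihat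
    hihat_mem hihat_nonempty hihat_max
end

section
/- Let M ≥ 1, θ* ∈ ℝ, and θ̂, θ̄, b, cnf : {1,…,M} → ℝ satisfy: |θ̄(i) − θ*| ≤ b(i), |θ̂(i) − θ̄(i)| ≤ cnf(i), cnf(i) ≥ 0 for all i, b monotonically nondecreasing, cnf monotonically nonincreasing, and b(1) ≤ cnf(1). Define I(i) := [θ̂(i) − 2cnf(i), θ̂(i) + 2cnf(i)], î := max{ i : ⋂_{j=1}^{i} I(j) ≠ ∅ }, and ĩ := max{ i : b(i) ≤ cnf(i) }. Then: (a) θ* ∈ I(i) for every i ≤ ĩ; (b) î ≥ ĩ; and (c) |θ̂(î) − θ*| ≤ 6·cnf(ĩ). -/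
/-! Up to `ĩ` the bias is dominated by the confidence bound (`b i ≤ b ĩ ≤ cnf ĩ ≤ cnf i`),
so by the triangle inequality `θ*` lies in every interval `I i` with `i ≤ ĩ`. Hence `θ*` is a
common point of the first `ĩ` intervals, which gives `ĩ ≤ î`. Finally, a common point `x` of the
first `î` intervals links `θ̂ î` to `θ̂ ĩ`, and `θ̂ ĩ` to `θ*` costs another `2 cnf ĩ`:
`|θ̂ î - θ*| ≤ 2 cnf î + 2 cnf ĩ + 2 cnf ĩ ≤ 6 cnf ĩ`. -/

section StepwiseMonotone

variable {β : Type*} [Preorder β] {f : ℕ → β} {m M : ℕ}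

lemma monotoneOn_Icc_of_le_add_one_s1 (h : ∀ i ∈ Finset.Icc m (M - 1), f i ≤ f (i + 1)) :
    MonotoneOn f (Set.Icc m M) :=
  monotoneOn_of_le_add_one Set.ordConnected_Icc fun i _ hi hi' =>
    h i (Finset.mem_Icc.mpr ⟨hi.1, by have := hi'.2; omega⟩)

lemma antitoneOn_Icc_of_add_one_le_s1 (h : ∀ i ∈ Finset.Icc m (M - 1), f (i + 1) ≤ f i) :
    AntitoneOn f (Set.Icc m M) :=
  antitoneOn_of_add_one_le Set.ordConnected_Icc fun i _ hi hi' =>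
    h i (Finset.mem_Icc.mpr ⟨hi.1, by have := hi'.2; omega⟩)

end StepwiseMonotone

lemma abs_sub_le_two_mul_of_bias_le {θhat θbar θstar c b : ℝ} (hconf : |θhat - θbar| ≤ c)
    (hbias : |θbar - θstar| ≤ b) (hbc : b ≤ c) : |θhat - θstar| ≤ 2 * c :=
  calc |θhat - θstar| ≤ |θhat - θbar| + |θbar - θstar| := abs_sub_le _ _ _
    _ ≤ 2 * c := by linarith

lemma abs_sub_le_add_two_mul_of_common_point {a a' x θ r r' : ℝ} (hx : |a - x| ≤ r)
    (hx' : |a' - x| ≤ r') (hθ : |a' - θ| ≤ r') : |a - θ| ≤ r + 2 * r' := by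
  linarith [abs_sub_le a x a', abs_sub_le a a' θ, abs_sub_comm x a']

theorem slope_first_step_general
    (M : ℕ) (θstar : ℝ) (θhat θbar b cnf : ℕ → ℝ)
    (hbias : ∀ i ∈ Finset.Icc 1 M, |θbar i - θstar| ≤ b i)
    (hconf : ∀ i ∈ Finset.Icc 1 M, |θhat i - θbar i| ≤ cnf i)
    (hb_mono : ∀ i ∈ Finset.Icc 1 (M - 1), b i ≤ b (i + 1))
    (hcnf_mono : ∀ i ∈ Finset.Icc 1 (M - 1), cnf (i + 1) ≤ cnf i)
    (ihat : ℕ) (hihat_mem : ihat ∈ Finset.Icc 1 M)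
    (hihat_nonempty :
      (⋂ j ∈ Finset.Icc 1 ihat,
        Set.Icc (θhat j - 2 * cnf j) (θhat j + 2 * cnf j)).Nonempty)
    (hihat_max : ∀ i ∈ Finset.Icc 1 M,
      (⋂ j ∈ Finset.Icc 1 i,
        Set.Icc (θhat j - 2 * cnf j) (θhat j + 2 * cnf j)).Nonempty → i ≤ ihat)
    (itilde : ℕ) (hitilde_mem : itilde ∈ Finset.Icc 1 M)
    (hitilde_prop : b itilde ≤ cnf itilde) :
    (∀ i ∈ Finset.Icc 1 M, i ≤ itilde →
        θstar ∈ Set.Icc (θhat i - 2 * cnf i) (θhat i + 2 * cnf i)) ∧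
      itilde ≤ ihat ∧
      |θhat ihat - θstar| ≤ 6 * cnf itilde := by
  have hb := monotoneOn_Icc_of_le_add_one_s1 hb_mono
  have hcnf := antitoneOn_Icc_of_add_one_le_s1 hcnf_mono
  have hitilde : itilde ∈ Set.Icc 1 M := Finset.mem_Icc.mp hitilde_mem
  have covers (i : ℕ) (hi : i ∈ Finset.Icc 1 M) (hle : i ≤ itilde) :
      |θhat i - θstar| ≤ 2 * cnf i :=
    have hi' : i ∈ Set.Icc 1 M := Finset.mem_Icc.mp hi
    abs_sub_le_two_mul_of_bias_le (hconf i hi) (hbias i hi)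
      ((hb hi' hitilde hle).trans (hitilde_prop.trans (hcnf hi' hitilde hle)))
  have θstar_mem := fun i hi hle => Set.mem_Icc_iff_abs_le.mp (covers i hi hle)
  have itilde_le_ihat : itilde ≤ ihat :=
    hihat_max itilde hitilde_mem ⟨θstar, Set.mem_iInter₂.mpr fun j hj =>
      θstar_mem j (Finset.Icc_subset_Icc_right hitilde.2 hj) (Finset.mem_Icc.mp hj).2⟩
  refine ⟨θstar_mem, itilde_le_ihat, ?_⟩
  obtain ⟨x, hx⟩ := hihat_nonempty
  rw [Set.mem_iInter₂] at hx
  have hihat : ihat ∈ Set.Icc 1 M := Finset.mem_Icc.mp hihat_mem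
  have hx_ihat := Set.mem_Icc_iff_abs_le.mpr (hx ihat (Finset.mem_Icc.mpr ⟨hihat.1, le_rfl⟩))
  have hx_itilde := Set.mem_Icc_iff_abs_le.mpr
    (hx itilde (Finset.mem_Icc.mpr ⟨hitilde.1, itilde_le_ihat⟩))
  have := abs_sub_le_add_two_mul_of_common_point hx_ihat hx_itilde
    (covers itilde hitilde_mem le_rfl)
  linarith [hcnf hitilde hihat itilde_le_ihat]

/-- **First step of the SLOPE oracle-inequality proof.**
With a valid nondecreasing bias bound `b`, a valid nonincreasing nonnegative confidence
bound `cnf`, and `b 1 ≤ cnf 1`, letting `ihat` be the Lepski index (largest index whose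
prefix of intervals `I(j) = [θhat j − 2 cnf j, θhat j + 2 cnf j]` has a common point) and
`itilde` the largest index with `b i ≤ cnf i`, we have: (a) `θstar ∈ I i` for every
`i ≤ itilde`; (b) `itilde ≤ ihat`; (c) `|θhat ihat − θstar| ≤ 6 cnf itilde`. -/
theorem slope_first_step
    (M : ℕ) (hM : 1 ≤ M) (θstar : ℝ) (θhat θbar b cnf : ℕ → ℝ)
    (hbias : ∀ i ∈ Finset.Icc 1 M, |θbar i - θstar| ≤ b i)
    (hconf : ∀ i ∈ Finset.Icc 1 M, |θhat i - θbar i| ≤ cnf i)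
    (hcnf_nonneg : ∀ i ∈ Finset.Icc 1 M, 0 ≤ cnf i)
    (hb_mono : ∀ i ∈ Finset.Icc 1 (M - 1), b i ≤ b (i + 1))
    (hcnf_mono : ∀ i ∈ Finset.Icc 1 (M - 1), cnf (i + 1) ≤ cnf i)
    (hb1 : b 1 ≤ cnf 1)
    (ihat : ℕ) (hihat_mem : ihat ∈ Finset.Icc 1 M)
    (hihat_nonempty :
      (⋂ j ∈ Finset.Icc 1 ihat,
        Set.Icc (θhat j - 2 * cnf j) (θhat j + 2 * cnf j)).Nonempty)
    (hihat_max : ∀ i ∈ Finset.Icc 1 M,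
      (⋂ j ∈ Finset.Icc 1 i,
        Set.Icc (θhat j - 2 * cnf j) (θhat j + 2 * cnf j)).Nonempty → i ≤ ihat)
    (itilde : ℕ) (hitilde_mem : itilde ∈ Finset.Icc 1 M)
    (hitilde_prop : b itilde ≤ cnf itilde)
    (hitilde_max : ∀ i ∈ Finset.Icc 1 M, b i ≤ cnf i → i ≤ itilde) :
    (∀ i ∈ Finset.Icc 1 M, i ≤ itilde →
        θstar ∈ Set.Icc (θhat i - 2 * cnf i) (θhat i + 2 * cnf i)) ∧
      itilde ≤ ihat ∧
      |θhat ihat - θstar| ≤ 6 * cnf itilde :=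
  slope_first_step_general M θstar θhat θbar b cnf hbias hconf hb_mono hcnf_mono ihat hihat_mem
    hihat_nonempty hihat_max itilde hitilde_mem hitilde_prop
end

section
/- Let (Ω, F, μ) be a probability space, γ₀ ∈ (0, 1/2], h ∈ (0, γ₀], and L ≥ 0. Let t : Ω → ℝ be measurable with t(ω) ∈ [γ₀, 1 − γ₀] for all ω, and let r : Ω × [0,1] → [0,1] be jointly measurable such that for every ω the map a ↦ r(ω, a) is L-Lipschitz. On Ω × [0,1] equipped with μ ⊗ Unif([0,1]), define Y(ω, a) := (2h)⁻¹ · 1{|t(ω) − a| ≤ h} · r(ω, a). Then | E[Y] − E_μ[ r(ω, t(ω)) ] | ≤ L·h. -/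
/-!
Integrating out the uniform action first (Fubini), the inner integral is the average of
`r ω` over the window `[t ω - h, t ω + h]`, which lies in `[0, 1]` because `h ≤ γ₀`. On that
window an `L`-Lipschitz function stays within `L h` of its value at the centre, hence so does its
average, and integrating over `ω` preserves the bound.
-/

open MeasureTheory Metric

section

variable {α E : Type*} [MeasurableSpace α] {μ : Measure α} [NormedAddCommGroup E] [NormedSpace ℝ E]

theorem norm_integral_sub_integral_le [IsProbabilityMeasure μ] {f g : α → E} {K : ℝ}
    (hf : Integrable f μ) (hg : Integrable g μ) (hK : ∀ᵐ x ∂μ, ‖f x - g x‖ ≤ K) :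
    ‖∫ x, f x ∂μ - ∫ x, g x ∂μ‖ ≤ K := by
  rw [← integral_sub hf hg]
  simpa using norm_integral_le_of_norm_le_const hK

theorem norm_average_sub_le [CompleteSpace E] [IsFiniteMeasure μ] [NeZero μ] {f : α → E} {c : E}
    {K : ℝ} (hf : Integrable f μ) (hK : ∀ᵐ x ∂μ, ‖f x - c‖ ≤ K) :
    ‖⨍ x, f x ∂μ - c‖ ≤ K := by
  rw [average_eq']
  simpa using norm_integral_sub_integral_le
    (hf.smul_measure (ENNReal.inv_ne_top.2 (NeZero.ne (μ Set.univ))))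
    (integrable_const c) (Measure.ae_smul_measure hK _)

theorem norm_setAverage_closedBall_sub_le [CompleteSpace E] [PseudoMetricSpace α]
    [OpensMeasurableSpace α] {g : α → E} {c : α} {h : ℝ} {K : NNReal}
    (hg : LipschitzOnWith K g (closedBall c h)) (hint : IntegrableOn g (closedBall c h) μ)
    (hμ₀ : μ (closedBall c h) ≠ 0) (hμ : μ (closedBall c h) ≠ ⊤) :
    ‖⨍ x in closedBall c h, g x ∂μ - g c‖ ≤ K * h := by
  have := NeZero.mk hμ₀
  have := Fact.mk hμ.lt_top
  refine norm_average_sub_le hint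
    (ae_restrict_of_forall_mem measurableSet_closedBall fun x hx => ?_)
  rw [← dist_eq_norm]
  calc dist (g x) (g c) ≤ K * dist x c :=
        hg.dist_le_mul x hx c (mem_closedBall_self (nonneg_of_mem_closedBall hx))
    _ ≤ K * h := by gcongr; exact hx

end

theorem setIntegral_boxcar_eq_setAverage_closedBall {g : ℝ → ℝ} {c h : ℝ} {s : Set ℝ}
    (hh : 0 < h) (hcs : closedBall c h ⊆ s) :
    ∫ a in s, (if |c - a| ≤ h then g a / (2 * h) else 0) = ⨍ a in closedBall c h, g a := by
  have hkernel : (fun a => if |c - a| ≤ h then g a / (2 * h) else 0) =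
      (closedBall c h).indicator fun a => (2 * h)⁻¹ • g a := by
    ext a
    have hmem : a ∈ closedBall c h ↔ |c - a| ≤ h := by
      rw [mem_closedBall, Real.dist_eq, abs_sub_comm]
    by_cases ha : a ∈ closedBall c h
    · rw [Set.indicator_of_mem ha, if_pos (hmem.1 ha), smul_eq_mul, div_eq_inv_mul]
    · rw [Set.indicator_of_notMem ha, if_neg (mt hmem.2 ha)]
  rw [hkernel, setIntegral_indicator measurableSet_closedBall, Set.inter_eq_right.2 hcs,
    integral_smul, setAverage_eq, Real.volume_real_closedBall hh.le]

theorem abs_setIntegral_boxcar_sub_le {g : ℝ → ℝ} {c h : ℝ} {s : Set ℝ} {K : NNReal}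
    (hh : 0 < h) (hcs : closedBall c h ⊆ s) (hg : LipschitzOnWith K g s) :
    |(∫ a in s, if |c - a| ≤ h then g a / (2 * h) else 0) - g c| ≤ K * h := by
  rw [setIntegral_boxcar_eq_setAverage_closedBall hh hcs]
  have hg' := hg.mono hcs
  exact norm_setAverage_closedBall_sub_le hg'
    (hg'.continuousOn.integrableOn_compact (isCompact_closedBall c h)) (by simp [hh])
    measure_closedBall_lt_top.ne

theorem integrable_boxcar {Ω : Type*} [MeasurableSpace Ω] {ν : Measure (Ω × ℝ)}
    [IsFiniteMeasure ν] {t : Ω → ℝ} {r : Ω → ℝ → ℝ} {h : ℝ} (hh : 0 < h) (ht : Measurable t)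
    (hr : Measurable (Function.uncurry r)) (hrb : ∀ ω a, r ω a ∈ Set.Icc (0 : ℝ) 1) :
    Integrable (fun p : Ω × ℝ => if |t p.1 - p.2| ≤ h then r p.1 p.2 / (2 * h) else 0) ν := by
  have hmeas : Measurable fun p : Ω × ℝ => if |t p.1 - p.2| ≤ h then r p.1 p.2 / (2 * h) else 0 :=
    Measurable.ite (measurableSet_le ((ht.comp measurable_fst).sub measurable_snd).abs
      measurable_const) (hr.div_const _) measurable_const
  refine Integrable.of_bound (C := 1 / (2 * h)) hmeas.aestronglyMeasurable (ae_of_all _ fun p => ?_)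
  obtain ⟨hr0, hr1⟩ := hrb p.1 p.2
  rw [Real.norm_eq_abs]
  split_ifs
  · rw [abs_of_nonneg (by positivity)]
    gcongr
  · rw [abs_zero]
    positivity

theorem boxcar_bias_bound_uniform_logging_general
    {Ω : Type*} [MeasurableSpace Ω] (μ : Measure Ω) [IsProbabilityMeasure μ]
    (γ₀ h L : ℝ) (hh0 : 0 < h) (hhγ₀ : h ≤ γ₀)
    (hL : 0 ≤ L)
    (t : Ω → ℝ) (ht : Measurable t) (htr : ∀ ω, t ω ∈ Set.Icc γ₀ (1 - γ₀))
    (r : Ω → ℝ → ℝ) (hr : Measurable (Function.uncurry r))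
    (hrb : ∀ ω a, r ω a ∈ Set.Icc (0 : ℝ) 1)
    (hrlip : ∀ ω, ∀ a ∈ Set.Icc (0 : ℝ) 1, ∀ a' ∈ Set.Icc (0 : ℝ) 1,
      |r ω a - r ω a'| ≤ L * |a - a'|) :
    |(∫ p : Ω × ℝ, (if |t p.1 - p.2| ≤ h then r p.1 p.2 / (2 * h) else 0)
        ∂(μ.prod (volume.restrict (Set.Icc 0 1)))) -
      ∫ ω, r ω (t ω) ∂μ| ≤ L * h := by
  have hwindow (ω : Ω) : closedBall (t ω) h ⊆ Set.Icc 0 1 := by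
    rw [Real.closedBall_eq_Icc]
    exact Set.Icc_subset_Icc (by linarith [(htr ω).1]) (by linarith [(htr ω).2])
  have hlip (ω : Ω) : LipschitzOnWith ⟨L, hL⟩ (r ω) (Set.Icc 0 1) :=
    LipschitzOnWith.of_dist_le_mul fun a ha a' ha' => by
      rw [Real.dist_eq, Real.dist_eq]
      exact hrlip ω a ha a' ha'
  have hY := integrable_boxcar (ν := μ.prod (volume.restrict (Set.Icc 0 1))) hh0 ht hr hrb
  have hrt : Integrable (fun ω => r ω (t ω)) μ := by
    refine Integrable.of_bound (C := 1) (hr.comp (measurable_id.prodMk ht)).aestronglyMeasurable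
      (ae_of_all _ fun ω => ?_)
    rw [Real.norm_eq_abs, abs_of_nonneg (hrb ω (t ω)).1]
    exact (hrb ω (t ω)).2
  rw [integral_prod _ hY]
  exact norm_integral_sub_integral_le hY.integral_prod_left hrt
    (ae_of_all _ fun ω => abs_setIntegral_boxcar_sub_le hh0 (hwindow ω) (hlip ω))

/-- **Bias bound for the boxcar-kernel off-policy estimator with uniform logging.**
For a target-policy action `t ω ∈ [γ₀, 1−γ₀]`, rewards `r ω · ∈ [0,1]` that are
`L`-Lipschitz in the action, bandwidth `h ∈ (0, γ₀]`, and
`Y (ω,a) = (2h)⁻¹ 1{|t ω − a| ≤ h} r ω a` on `Ω × [0,1]` with the product of `μ` and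
the uniform measure on `[0,1]`: `|E[Y] − E_μ[r ω (t ω)]| ≤ L h`. -/
theorem boxcar_bias_bound_uniform_logging
    {Ω : Type*} [MeasurableSpace Ω] (μ : Measure Ω) [IsProbabilityMeasure μ]
    (γ₀ h L : ℝ) (hγ₀0 : 0 < γ₀) (hγ₀2 : γ₀ ≤ 1 / 2) (hh0 : 0 < h) (hhγ₀ : h ≤ γ₀)
    (hL : 0 ≤ L)
    (t : Ω → ℝ) (ht : Measurable t) (htr : ∀ ω, t ω ∈ Set.Icc γ₀ (1 - γ₀))
    (r : Ω → ℝ → ℝ) (hr : Measurable (Function.uncurry r))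
    (hrb : ∀ ω a, r ω a ∈ Set.Icc (0 : ℝ) 1)
    (hrlip : ∀ ω, ∀ a ∈ Set.Icc (0 : ℝ) 1, ∀ a' ∈ Set.Icc (0 : ℝ) 1,
      |r ω a - r ω a'| ≤ L * |a - a'|) :
    |(∫ p : Ω × ℝ, (if |t p.1 - p.2| ≤ h then r p.1 p.2 / (2 * h) else 0)
        ∂(μ.prod (volume.restrict (Set.Icc 0 1)))) -
      ∫ ω, r ω (t ω) ∂μ| ≤ L * h :=
  boxcar_bias_bound_uniform_logging_general μ γ₀ h L hh0 hhγ₀ hL t ht htr r hr hrb hrlip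
end

section
/- Let (Ω, F, μ) be a probability space, γ₀ ∈ (0, 1/2], h ∈ (0, γ₀], and p_min ∈ (0, 1]. Let t : Ω → ℝ be measurable with t(ω) ∈ [γ₀, 1 − γ₀], let r : Ω × [0,1] → [0,1] be jointly measurable, and let π : Ω × [0,1] → ℝ be jointly measurable with π(ω, a) ≥ p_min for all (ω,a) and ∫₀¹ π(ω, a) da = 1 for every ω. Let P be the probability measure on Ω × [0,1] defined by P(f) = ∫_Ω ∫₀¹ f(ω,a)·π(ω,a) da dμ(ω), and define Y(ω,a) := (2h·π(ω,a))⁻¹ · 1{|t(ω) − a| ≤ h} · r(ω,a). Then 0 ≤ Y ≤ 1/(2h·p_min) P-almost surely, and Var_P(Y) ≤ 1/(2h·p_min). -/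
open MeasureTheory

/-! Pointwise, `0 ≤ Y ≤ M := 1 / (2 h p_min)` because `r ∈ [0,1]` and `π ≥ p_min`. Importance
weighting cancels the propensity: `E_P[Y] = ∫∫ 1{|t ω - a| ≤ h} r(ω,a) / (2h) da dμ(ω)`, which is
at most `1` since every window `[t ω - h, t ω + h]` has length `2h`. The Bhatia–Davis inequality
`Var Y ≤ (M - E Y) E Y` then gives `Var Y ≤ M`. -/

theorem isProbabilityMeasure_prod_withDensity_ofReal {α β : Type*} [MeasurableSpace α]
    [MeasurableSpace β] (μ : Measure α) [IsProbabilityMeasure μ] (ν : Measure β) [SFinite ν]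
    {f : α → β → ℝ} (hf : Measurable (Function.uncurry f)) (hf0 : ∀ a, 0 ≤ᵐ[ν] f a)
    (hf1 : ∀ a, ∫ b, f a b ∂ν = 1) :
    IsProbabilityMeasure ((μ.prod ν).withDensity fun p => ENNReal.ofReal (f p.1 p.2)) := by
  have hfiber (a : α) : ∫⁻ b, ENNReal.ofReal (f a b) ∂ν = 1 := by
    rw [← ofReal_integral_eq_lintegral_ofReal (integrable_of_integral_eq_one (hf1 a)) (hf0 a),
      hf1 a, ENNReal.ofReal_one]
  constructor
  rw [withDensity_apply _ MeasurableSet.univ, Measure.restrict_univ,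
    lintegral_prod (fun p : α × β => ENNReal.ofReal (f p.1 p.2)) hf.ennreal_ofReal.aemeasurable]
  simp [hfiber]

section Boxcar

variable {Ω : Type*}

/-- The paper's `Y`. -/
noncomputable def boxcarIPWEstimator (h : ℝ) (t : Ω → ℝ) (r π : Ω → ℝ → ℝ) (p : Ω × ℝ) : ℝ :=
  if |t p.1 - p.2| ≤ h then r p.1 p.2 / (2 * h * π p.1 p.2) else 0

variable {h : ℝ} {t : Ω → ℝ} {r π : Ω → ℝ → ℝ}

theorem boxcarIPWEstimator_nonneg (hh : 0 ≤ h) {p : Ω × ℝ} (hr : 0 ≤ r p.1 p.2)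
    (hπ : 0 ≤ π p.1 p.2) : 0 ≤ boxcarIPWEstimator h t r π p := by
  unfold boxcarIPWEstimator
  split_ifs
  · positivity
  · exact le_rfl

theorem boxcarIPWEstimator_le {pmin : ℝ} (hh : 0 < h) (hpmin : 0 < pmin) {p : Ω × ℝ}
    (hr : r p.1 p.2 ≤ 1) (hπ : pmin ≤ π p.1 p.2) :
    boxcarIPWEstimator h t r π p ≤ 1 / (2 * h * pmin) := by
  unfold boxcarIPWEstimator
  split_ifs
  · exact div_le_div₀ zero_le_one hr (by positivity) (by gcongr)
  · positivity

theorem mul_boxcarIPWEstimator_le_indicator (hh : 0 ≤ h) {p : Ω × ℝ} (hr : r p.1 p.2 ≤ 1) :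
    π p.1 p.2 * boxcarIPWEstimator h t r π p ≤
      {q : Ω × ℝ | |t q.1 - q.2| ≤ h}.indicator (fun _ => 1 / (2 * h)) p := by
  unfold boxcarIPWEstimator
  by_cases hp : |t p.1 - p.2| ≤ h
  · rw [if_pos hp, Set.indicator_of_mem (show p ∈ {q : Ω × ℝ | |t q.1 - q.2| ≤ h} from hp)]
    rcases eq_or_ne (π p.1 p.2) 0 with hπ | hπ
    · rw [hπ, zero_mul]
      positivity
    · rw [mul_div_assoc', mul_comm (2 * h), ← div_div, mul_div_cancel_left₀ _ hπ]
      gcongr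
  · simp [hp]

variable [MeasurableSpace Ω]

theorem measurableSet_setOf_abs_sub_le (ht : Measurable t) :
    MeasurableSet {p : Ω × ℝ | |t p.1 - p.2| ≤ h} :=
  measurableSet_le ((ht.comp measurable_fst).sub measurable_snd).abs measurable_const

theorem prod_restrict_setOf_abs_sub_le_le (μ : Measure Ω) [IsProbabilityMeasure μ]
    (ht : Measurable t) (s : Set ℝ) :
    μ.prod (volume.restrict s) {p | |t p.1 - p.2| ≤ h} ≤ ENNReal.ofReal (2 * h) := by
  have hfiber (ω : Ω) :
      Prod.mk ω ⁻¹' {p : Ω × ℝ | |t p.1 - p.2| ≤ h} = Set.Icc (t ω - h) (t ω + h) := by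
    ext a
    simp only [Set.mem_preimage, Set.mem_ofPred_eq, Set.mem_Icc, abs_le]
    constructor <;> rintro ⟨h₁, h₂⟩ <;> constructor <;> linarith
  rw [Measure.prod_apply (measurableSet_setOf_abs_sub_le ht)]
  calc ∫⁻ ω, volume.restrict s (Prod.mk ω ⁻¹' {p | |t p.1 - p.2| ≤ h}) ∂μ
      ≤ ∫⁻ _, ENNReal.ofReal (2 * h) ∂μ := by
        refine lintegral_mono fun ω => ?_
        rw [hfiber, ← show t ω + h - (t ω - h) = 2 * h by ring, ← Real.volume_Icc]
        exact Measure.restrict_apply_le _ _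
    _ = ENNReal.ofReal (2 * h) := by simp

theorem measurable_boxcarIPWEstimator (ht : Measurable t) (hr : Measurable (Function.uncurry r))
    (hπ : Measurable (Function.uncurry π)) : Measurable (boxcarIPWEstimator h t r π) :=
  Measurable.ite (measurableSet_setOf_abs_sub_le ht)
    (hr.div (hπ.const_mul _)) measurable_const

theorem integral_boxcarIPWEstimator_le_one (μ : Measure Ω) [IsProbabilityMeasure μ] (s : Set ℝ)
    (hh : 0 < h) (ht : Measurable t) (hr : ∀ ω a, r ω a ∈ Set.Icc (0 : ℝ) 1)
    (hπ : Measurable (Function.uncurry π)) (hπ0 : ∀ ω a, 0 ≤ π ω a) :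
    ∫ p, boxcarIPWEstimator h t r π p ∂(μ.prod (volume.restrict s)).withDensity
      (fun p => ENNReal.ofReal (π p.1 p.2)) ≤ 1 := by
  set W := {q : Ω × ℝ | |t q.1 - q.2| ≤ h}
  have hW : MeasurableSet W := measurableSet_setOf_abs_sub_le ht
  have hνW : μ.prod (volume.restrict s) W ≤ ENNReal.ofReal (2 * h) :=
    prod_restrict_setOf_abs_sub_le_le μ ht s
  have hdensity : Measurable fun p : Ω × ℝ => ENNReal.ofReal (π p.1 p.2) := hπ.ennreal_ofReal
  rw [integral_withDensity_eq_integral_toReal_smul hdensity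
    (ae_of_all _ fun _ => ENNReal.ofReal_lt_top)]
  calc ∫ p, (ENNReal.ofReal (π p.1 p.2)).toReal • boxcarIPWEstimator h t r π p
        ∂μ.prod (volume.restrict s)
      = ∫ p, π p.1 p.2 * boxcarIPWEstimator h t r π p ∂μ.prod (volume.restrict s) := by
        simp only [ENNReal.toReal_ofReal (hπ0 _ _), smul_eq_mul]
    _ ≤ ∫ p, W.indicator (fun _ => 1 / (2 * h)) p ∂μ.prod (volume.restrict s) :=
        integral_mono_of_nonneg
          (ae_of_all _ fun p => mul_nonneg (hπ0 _ _)
            (boxcarIPWEstimator_nonneg hh.le (hr _ _).1 (hπ0 _ _)))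
          ((integrable_indicator_iff hW).2 (integrableOn_const (ne_top_of_le_ne_top
            ENNReal.ofReal_ne_top hνW)))
          (ae_of_all _ fun p => mul_boxcarIPWEstimator_le_indicator hh.le (hr _ _).2)
    _ = (μ.prod (volume.restrict s)).real W * (1 / (2 * h)) := integral_indicator_const _ hW
    _ ≤ 2 * h * (1 / (2 * h)) := by
        gcongr
        exact ENNReal.toReal_le_of_le_ofReal (by positivity) hνW
    _ = 1 := by field_simp

end Boxcar

theorem boxcar_variance_range_nonuniform_logging_general
    {Ω : Type*} [MeasurableSpace Ω] (μ : Measure Ω) [IsProbabilityMeasure μ]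
    (h pmin : ℝ) (hh0 : 0 < h)
    (hpmin0 : 0 < pmin)
    (t : Ω → ℝ) (ht : Measurable t)
    (r : Ω → ℝ → ℝ) (hr : Measurable (Function.uncurry r))
    (hrb : ∀ ω a, r ω a ∈ Set.Icc (0 : ℝ) 1)
    (π : Ω → ℝ → ℝ) (hπ : Measurable (Function.uncurry π))
    (hπlb : ∀ ω a, pmin ≤ π ω a)
    (hπint : ∀ ω, ∫ a in Set.Icc (0 : ℝ) 1, π ω a = 1)
    (P : Measure (Ω × ℝ))
    (hP : P = (μ.prod (volume.restrict (Set.Icc 0 1))).withDensity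
      (fun p => ENNReal.ofReal (π p.1 p.2))) :
    (∀ᵐ p ∂P,
        0 ≤ (if |t p.1 - p.2| ≤ h then r p.1 p.2 / (2 * h * π p.1 p.2) else 0) ∧
        (if |t p.1 - p.2| ≤ h then r p.1 p.2 / (2 * h * π p.1 p.2) else 0) ≤
          1 / (2 * h * pmin)) ∧
      ProbabilityTheory.variance
        (fun p : Ω × ℝ =>
          if |t p.1 - p.2| ≤ h then r p.1 p.2 / (2 * h * π p.1 p.2) else 0) P ≤
        1 / (2 * h * pmin) := by
  have hπ0 (ω : Ω) (a : ℝ) : 0 ≤ π ω a := hpmin0.le.trans (hπlb ω a)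
  have hbounds (p : Ω × ℝ) : boxcarIPWEstimator h t r π p ∈ Set.Icc 0 (1 / (2 * h * pmin)) :=
    ⟨boxcarIPWEstimator_nonneg hh0.le (hrb _ _).1 (hπ0 _ _),
      boxcarIPWEstimator_le hh0 hpmin0 (hrb _ _).2 (hπlb _ _)⟩
  refine ⟨ae_of_all _ hbounds, ?_⟩
  have : IsProbabilityMeasure P := hP ▸
    isProbabilityMeasure_prod_withDensity_ofReal μ _ hπ (fun ω => ae_of_all _ (hπ0 ω)) hπint
  have hm1 : ∫ p, boxcarIPWEstimator h t r π p ∂P ≤ 1 :=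
    hP ▸ integral_boxcarIPWEstimator_le_one μ _ hh0 ht hrb hπ hπ0
  have hm0 : 0 ≤ ∫ p, boxcarIPWEstimator h t r π p ∂P := integral_nonneg fun p => (hbounds p).1
  have hM : 0 ≤ 1 / (2 * h * pmin) := by positivity
  set m := ∫ p, boxcarIPWEstimator h t r π p ∂P
  calc ProbabilityTheory.variance (boxcarIPWEstimator h t r π) P
      ≤ (1 / (2 * h * pmin) - m) * (m - 0) :=
        ProbabilityTheory.variance_le_sub_mul_sub (ae_of_all _ hbounds)
          (measurable_boxcarIPWEstimator ht hr hπ).aemeasurable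
    _ ≤ 1 / (2 * h * pmin) := by nlinarith

/-- **Variance and range bounds for the boxcar-kernel off-policy estimator under a
non-uniform logging policy.** The logged-data distribution `P` on `Ω × [0,1]` has
density `π(ω,a) ≥ p_min` (in the action) with `∫₀¹ π(ω,a) da = 1`, and
`Y (ω,a) = (2 h π(ω,a))⁻¹ 1{|t ω − a| ≤ h} r ω a` is the single-sample
inverse-propensity-weighted kernel estimate.  Then `0 ≤ Y ≤ 1/(2 h p_min)` `P`-a.s.
and `Var_P(Y) ≤ 1/(2 h p_min)`. -/
theorem boxcar_variance_range_nonuniform_logging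
    {Ω : Type*} [MeasurableSpace Ω] (μ : Measure Ω) [IsProbabilityMeasure μ]
    (γ₀ h pmin : ℝ) (hγ₀0 : 0 < γ₀) (hγ₀2 : γ₀ ≤ 1 / 2) (hh0 : 0 < h) (hhγ₀ : h ≤ γ₀)
    (hpmin0 : 0 < pmin) (hpmin1 : pmin ≤ 1)
    (t : Ω → ℝ) (ht : Measurable t) (htr : ∀ ω, t ω ∈ Set.Icc γ₀ (1 - γ₀))
    (r : Ω → ℝ → ℝ) (hr : Measurable (Function.uncurry r))
    (hrb : ∀ ω a, r ω a ∈ Set.Icc (0 : ℝ) 1)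
    (π : Ω → ℝ → ℝ) (hπ : Measurable (Function.uncurry π))
    (hπlb : ∀ ω a, pmin ≤ π ω a)
    (hπint : ∀ ω, ∫ a in Set.Icc (0 : ℝ) 1, π ω a = 1)
    (P : Measure (Ω × ℝ))
    (hP : P = (μ.prod (volume.restrict (Set.Icc 0 1))).withDensity
      (fun p => ENNReal.ofReal (π p.1 p.2))) :
    (∀ᵐ p ∂P,
        0 ≤ (if |t p.1 - p.2| ≤ h then r p.1 p.2 / (2 * h * π p.1 p.2) else 0) ∧
        (if |t p.1 - p.2| ≤ h then r p.1 p.2 / (2 * h * π p.1 p.2) else 0) ≤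
          1 / (2 * h * pmin)) ∧
      ProbabilityTheory.variance
        (fun p : Ω × ℝ =>
          if |t p.1 - p.2| ≤ h then r p.1 p.2 / (2 * h * π p.1 p.2) else 0) P ≤
        1 / (2 * h * pmin) :=
  boxcar_variance_range_nonuniform_logging_general μ h pmin hh0 hpmin0 t ht r hr hrb π hπ hπlb hπint
    P hP
end
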